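/- arXiv:1101.5876 — 2 statements merged into one kernel-verified Lean document; each statement's English description precedes it below -/
import Mathlib

section
/- Let G = (V,E) be a connected graph with colouring ω from colour-set C, let u,v ∈ V and d ∈ C. Then the minimum number of flooding moves needed in G to link u and v in a monochromatic component of colour d equals the minimum, over all u-v paths P in G, of the number of moves needed to flood the isolated path P (with the induced colouring) entirely with colour d. That is, m_{G,ω}(u,v,d) = min_{P ∈ P_G(u,v)} m(P, ω|_P, d). -/
namespace Flood

variable {V C : Type*}

/-- Two vertices are joined by an edge inside a monochromatic class. -/
def monoAdj (G : SimpleGraph V) (ω : V → C) (a b : V) : Prop :=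
  G.Adj a b ∧ ω a = ω b

/-- `u` and `v` lie in a common monochromatic component of the colouring `ω`. -/
def monoLinked (G : SimpleGraph V) (ω : V → C) (u v : V) : Prop :=
  Relation.ReflTransGen (monoAdj G ω) u v

/-- One flooding move: recolour the monochromatic component of `v` with colour `d`. -/
noncomputable def floodMove (G : SimpleGraph V) (ω : V → C) (v : V) (d : C) : V → C :=
  fun u => @ite _ (monoLinked G ω v u) (Classical.propDecidable _) d (ω u)

/-- Apply a sequence of flooding moves. -/
noncomputable def floodSeq (G : SimpleGraph V) (ω : V → C) (S : List (V × C)) : V → C :=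
  S.foldl (fun ω' m => floodMove G ω' m.1 m.2) ω

/-- The sequence `S` floods `G`, i.e. makes it monochromatic. -/
def Floods (G : SimpleGraph V) (ω : V → C) (S : List (V × C)) : Prop :=
  ∀ a b, floodSeq G ω S a = floodSeq G ω S b

/-- Minimum number of moves needed to make `G` monochromatic. -/
noncomputable def floodCost (G : SimpleGraph V) (ω : V → C) : ℕ :=
  sInf {k | ∃ S, S.length = k ∧ Floods G ω S}

/-- Minimum number of moves needed to make `G` monochromatic in colour `d`. -/
noncomputable def floodCostIn (G : SimpleGraph V) (ω : V → C) (d : C) : ℕ :=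
  sInf {k | ∃ S, S.length = k ∧ ∀ a, floodSeq G ω S a = d}

/-- The sequence `S` links `u` and `v`. -/
def Links (G : SimpleGraph V) (ω : V → C) (S : List (V × C)) (u v : V) : Prop :=
  monoLinked G (floodSeq G ω S) u v

/-- Minimum number of moves needed to link `u` and `v`. -/
noncomputable def linkCost (G : SimpleGraph V) (ω : V → C) (u v : V) : ℕ :=
  sInf {k | ∃ S, S.length = k ∧ Links G ω S u v}

/-- Minimum number of moves needed to link `u` and `v` in a monochromatic
component of colour `d`. -/
noncomputable def linkCostIn (G : SimpleGraph V) (ω : V → C) (u v : V) (d : C) : ℕ :=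
  sInf {k | ∃ S, S.length = k ∧ Links G ω S u v ∧ floodSeq G ω S u = d}


/-- The colouring induced on (the vertex sequence of) a walk, viewed as an
isolated path graph. -/
def pathColouring (ω : V → C) {G : SimpleGraph V} {u v : V}
    (P : G.Walk u v) : Fin (P.length + 1) → C :=
  fun i => ω (P.support.get (Fin.cast P.length_support.symm i))

end Flood

open Flood

/-!
Both inequalities come from simulating one game by the other along walks. The engine is that
reindexing a path colouring along a monotone map never makes flooding it costlier: a move on the
original path is matched by at most one move on the reindexed one, after collapsing the
reindexed path's flooded interval onto a single position.

A move at `w` in `G` is seen on a walk `W` after rerouting `W` (a `Detour`): the stretch between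
its first and last visits to the monochromatic component `D` of `w` is replaced by a walk inside
`D`. On the rerouted walk `D` occupies one interval, so flooding `w` in `G` is flooding that
interval of the path, and for colourings constant on `D` the rerouted walk is a monotone
reindexing of `W`. Conversely, flooding position `p` of a walk is simulated by flooding `W p` in
`G` after rerouting `W` through its component. Walks are shortened to paths by `bypass`, again a
monotone reindexing.
-/

theorem Monotone.ite_mem_ordConnected {α β : Type*} [LinearOrder α] [Preorder β]
    {g : α → β} (hg : Monotone g) {A : Set α} [DecidablePred (· ∈ A)] (hA : A.OrdConnected) {a : α}
    (ha : a ∈ A) : Monotone fun x => if x ∈ A then g a else g x := by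
  intro x y hxy
  by_cases hx : x ∈ A <;> by_cases hy : y ∈ A <;> simp only [hx, hy, if_true, if_false]
  · exact le_rfl
  · exact hg (not_lt.1 fun hya => hy (hA.out hx ha ⟨hxy, hya.le⟩))
  · exact hg (not_lt.1 fun hax => hx (hA.out ha hy ⟨hax.le, hxy⟩))
  · exact hg hxy

theorem Monotone.apply_eq_of_mem_uIcc {α β : Type*} [LinearOrder α] [LinearOrder β]
    {f : α → β} (hf : Monotone f) {a b c : α} (hab : f a = f b) (hc : c ∈ Set.uIcc a b) :
    f c = f a := by
  have := hf.mapsTo_uIcc hc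
  rwa [← hab, Set.uIcc_self, Set.mem_singleton_iff] at this

theorem Nat.exists_first_last {P : ℕ → Prop} [DecidablePred P] {p N : ℕ} (hp : P p)
    (hpN : p ≤ N) : ∃ ℓ r, ℓ ≤ p ∧ p ≤ r ∧ r ≤ N ∧ P ℓ ∧ P r ∧ (∀ j < ℓ, ¬ P j) ∧
      ∀ j, r < j → j ≤ N → ¬ P j :=
  ⟨Nat.find ⟨p, hp⟩, Nat.findGreatest P N, Nat.find_min' _ hp, Nat.le_findGreatest hpN hp,
    Nat.findGreatest_le N, Nat.find_spec ⟨p, hp⟩, Nat.findGreatest_spec hpN hp,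
    fun _ => Nat.find_min _, fun _ => Nat.findGreatest_is_greatest⟩

theorem Nat.sInf_eq_sInf_of_forall_exists_le {A B : Set ℕ}
    (hAB : ∀ a ∈ A, ∃ b ∈ B, b ≤ a) (hBA : ∀ b ∈ B, ∃ a ∈ A, a ≤ b) : sInf A = sInf B := by
  rcases B.eq_empty_or_nonempty with rfl | hB
  · have hA : A = ∅ := Set.eq_empty_of_forall_notMem fun a ha => by simpa using hAB a ha
    rw [hA]
  · have hA : A.Nonempty := let ⟨b, hb⟩ := hB; let ⟨a, ha, _⟩ := hBA b hb; ⟨a, ha⟩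
    obtain ⟨a, ha, hab⟩ := hBA _ (Nat.sInf_mem hB)
    obtain ⟨b, hb, hba⟩ := hAB _ (Nat.sInf_mem hA)
    exact le_antisymm ((Nat.sInf_le ha).trans hab) ((Nat.sInf_le hb).trans hba)

namespace Flood

open SimpleGraph

variable {V C : Type*} {G : SimpleGraph V} {ω : V → C}

theorem monoAdj.symm {a b : V} (h : monoAdj G ω a b) : monoAdj G ω b a := ⟨h.1.symm, h.2.symm⟩

theorem monoLinked.symm {a b : V} (h : monoLinked G ω a b) : monoLinked G ω b a := by
  induction h with
  | refl => exact .refl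
  | tail _ hstep ih => exact .head hstep.symm ih

theorem monoLinked.trans {a b c : V} (hab : monoLinked G ω a b) (hbc : monoLinked G ω b c) :
    monoLinked G ω a c :=
  Relation.ReflTransGen.trans hab hbc

theorem monoLinked.colour_eq {a b : V} (h : monoLinked G ω a b) : ω a = ω b := by
  induction h with
  | refl => rfl
  | tail _ hstep ih => exact ih.trans hstep.2

theorem monoLinked.exists_walk {a b : V} (h : monoLinked G ω a b) :
    ∃ q : G.Walk a b, ∀ z ∈ q.support, monoLinked G ω a z := by
  induction h with
  | refl => exact ⟨.nil, fun z hz => by obtain rfl := List.mem_singleton.1 hz; exact .refl⟩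
  | tail hab hstep ih =>
    obtain ⟨q, hq⟩ := ih
    refine ⟨q.concat hstep.1, fun z hz => ?_⟩
    rw [Walk.support_concat, List.mem_append, List.mem_singleton] at hz
    rcases hz with hz | rfl
    exacts [hq z hz, hab.tail hstep]

theorem floodMove_apply_of_monoLinked {w x : V} {c : C} (h : monoLinked G ω w x) :
    floodMove G ω w c x = c := if_pos h

theorem floodMove_apply_of_not_monoLinked {w x : V} {c : C} (h : ¬ monoLinked G ω w x) :
    floodMove G ω w c x = ω x := if_neg h

theorem floodMove_apply_of_eq {w x : V} {d : C} (hx : ω x = d) : floodMove G ω w d x = d := by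
  by_cases h : monoLinked G ω w x
  · exact floodMove_apply_of_monoLinked h
  · rwa [floodMove_apply_of_not_monoLinked h]

theorem floodSeq_cons (G : SimpleGraph V) (ω : V → C) (m : V × C) (S : List (V × C)) :
    floodSeq G ω (m :: S) = floodSeq G (floodMove G ω m.1 m.2) S := rfl

theorem floodSeq_apply_of_eq {d : C} {S : List (V × C)} (hS : ∀ m ∈ S, m.2 = d) {x : V}
    (hx : ω x = d) : floodSeq G ω S x = d := by
  induction S generalizing ω with
  | nil => exact hx
  | cons m S ih =>
    rw [floodSeq_cons]
    refine ih (fun m' hm' => hS m' (List.mem_cons_of_mem _ hm')) ?_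
    rw [hS m List.mem_cons_self]
    exact floodMove_apply_of_eq hx

theorem floodSeq_map_apply (d : C) {L : List V} {x : V} (hx : x ∈ L) :
    floodSeq G ω (L.map (·, d)) x = d := by
  induction L generalizing ω with
  | nil => simp at hx
  | cons y L ih =>
    rw [List.map_cons, floodSeq_cons]
    rcases List.mem_cons.1 hx with rfl | hx
    · exact floodSeq_apply_of_eq (by simp) (floodMove_apply_of_monoLinked .refl)
    · exact ih hx

theorem floodCostIn_le_length {d : C} {S : List (V × C)} (hS : ∀ a, floodSeq G ω S a = d) :
    floodCostIn G ω d ≤ S.length :=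
  Nat.sInf_le ⟨S, rfl, hS⟩

theorem exists_length_eq_floodCostIn [Fintype V] (G : SimpleGraph V) (ω : V → C) (d : C) :
    ∃ S : List (V × C), S.length = floodCostIn G ω d ∧ ∀ a, floodSeq G ω S a = d :=
  Nat.sInf_mem (s := {k | ∃ S : List (V × C), S.length = k ∧ ∀ a, floodSeq G ω S a = d})
    ⟨_, (Finset.univ.toList.map (·, d)), rfl,
    fun _ => floodSeq_map_apply d (Finset.mem_toList.2 (Finset.mem_univ _))⟩

theorem floodCostIn_le_floodCostIn_floodMove_add_one [Fintype V] (w : V) (c d : C) :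
    floodCostIn G ω d ≤ floodCostIn G (floodMove G ω w c) d + 1 := by
  obtain ⟨S, hlen, hS⟩ := exists_length_eq_floodCostIn G (floodMove G ω w c) d
  rw [← hlen]
  exact floodCostIn_le_length (S := (w, c) :: S) hS

section PathGraph

variable {n : ℕ} {τ : Fin n → C}

theorem monoLinked_pathGraph_iff {i j : Fin n} :
    monoLinked (pathGraph n) τ i j ↔ ∀ k ∈ Set.uIcc i j, τ k = τ i := by
  constructor
  · intro h
    induction h with
    | refl => intro k hk; rw [Set.uIcc_self, Set.mem_singleton_iff] at hk; rw [hk]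
    | @tail j j' _ hstep ih =>
      intro k hk
      by_cases hkj : k = j'
      · rw [hkj, ← hstep.2]; exact ih j Set.right_mem_uIcc
      · have hadj := pathGraph_adj.1 hstep.1
        have hkj' : k.val ≠ j'.val := fun h => hkj (Fin.ext h)
        refine ih k ?_
        simp only [Set.mem_uIcc, Fin.le_def] at hk ⊢
        omega
  · intro h
    have hsucc :
        ∀ k, min i j ≤ k → k < max i j → monoAdj (pathGraph n) τ k (Order.succ k) := by
      intro k hk₁ hk₂
      have hcov : k ⋖ Order.succ k := Order.covBy_succ_of_not_isMax (not_isMax_of_lt hk₂)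
      refine ⟨hasse_adj.2 (Or.inl hcov), ?_⟩
      rw [h k ⟨hk₁, hk₂.le⟩, h _ ⟨hk₁.trans hcov.le, Order.succ_le_of_lt hk₂⟩]
    refine reflTransGen_of_succ _ (fun k hk => hsucc k ?_ ?_) (fun k hk => (hsucc k ?_ ?_).symm)
    · exact min_le_left i j |>.trans hk.1
    · exact hk.2.trans_le (le_max_right i j)
    · exact min_le_right i j |>.trans hk.1
    · exact hk.2.trans_le (le_max_left i j)

theorem ordConnected_setOf_monoLinked_pathGraph (i : Fin n) :
    {j | monoLinked (pathGraph n) τ i j}.OrdConnected := by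
  refine ⟨fun x hx y hy z hz => ?_⟩
  simp only [Set.mem_ofPred_eq, monoLinked_pathGraph_iff] at hx hy ⊢
  intro k hk
  have : k ∈ Set.uIcc i x ∨ k ∈ Set.uIcc i y := by
    simp only [Set.mem_uIcc, Set.mem_Icc, Fin.le_def] at hk hz ⊢
    omega
  rcases this with hk | hk
  exacts [hx k hk, hy k hk]

theorem monoLinked_comp_of_monotone {m : ℕ} {g : Fin m → Fin n} (hg : Monotone g) {a b : Fin m}
    (h : monoLinked (pathGraph n) τ (g a) (g b)) : monoLinked (pathGraph m) (τ ∘ g) a b := by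
  rw [monoLinked_pathGraph_iff] at h ⊢
  exact fun k hk => h (g k) (hg.mapsTo_uIcc hk)

end PathGraph

section Reindex

variable {n m : ℕ}

theorem exists_floods_comp_of_monotone {τ : Fin n → C} {d : C} {S : List (Fin n × C)}
    (hS : ∀ a, floodSeq (pathGraph n) τ S a = d) {g : Fin m → Fin n} (hg : Monotone g) :
    ∃ S' : List (Fin m × C), S'.length ≤ S.length ∧
      ∀ a, floodSeq (pathGraph m) (τ ∘ g) S' a = d := by
  induction S generalizing τ g with
  | nil => exact ⟨[], le_rfl, fun a => hS (g a)⟩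
  | cons mv S ih =>
    obtain ⟨w, c⟩ := mv
    by_cases hhit : ∃ w', monoLinked (pathGraph n) τ w (g w')
    · obtain ⟨w', hw'⟩ := hhit
      classical
      -- collapse the class of `w'` onto `w'`, whose image lies in the class of `w`
      set A := {j | monoLinked (pathGraph m) (τ ∘ g) w' j}
      have hg' : Monotone fun j => if j ∈ A then g w' else g j :=
        hg.ite_mem_ordConnected (ordConnected_setOf_monoLinked_pathGraph w') .refl
      have hmove : floodMove (pathGraph m) (τ ∘ g) w' c =
          floodMove (pathGraph n) τ w c ∘ fun j => if j ∈ A then g w' else g j := by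
        funext j
        by_cases hj : j ∈ A
        · simp only [Function.comp_apply, if_pos hj]
          rw [floodMove_apply_of_monoLinked hj, floodMove_apply_of_monoLinked hw']
        · have hj' : ¬ monoLinked (pathGraph n) τ w (g j) := fun h =>
            hj (monoLinked_comp_of_monotone hg (hw'.symm.trans h))
          simp only [Function.comp_apply, if_neg hj]
          rw [floodMove_apply_of_not_monoLinked hj, floodMove_apply_of_not_monoLinked hj',
            Function.comp_apply]
      obtain ⟨S', hlen, hS'⟩ := ih hS hg'
      refine ⟨(w', c) :: S', by simpa using hlen, ?_⟩
      rw [floodSeq_cons, hmove]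
      exact hS'
    · rw [not_exists] at hhit
      have hmove : floodMove (pathGraph n) τ w c ∘ g = τ ∘ g :=
        funext fun j => floodMove_apply_of_not_monoLinked (hhit j)
      obtain ⟨S', hlen, hS'⟩ := ih hS hg
      exact ⟨S', hlen.trans (Nat.le_succ _), hmove ▸ hS'⟩

theorem floodCostIn_comp_le_of_monotone {τ : Fin n → C} {g : Fin m → Fin n} (hg : Monotone g)
    (d : C) : floodCostIn (pathGraph m) (τ ∘ g) d ≤ floodCostIn (pathGraph n) τ d := by
  obtain ⟨S, hlen, hS⟩ := exists_length_eq_floodCostIn (pathGraph n) τ d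
  obtain ⟨S', hle, hS'⟩ := exists_floods_comp_of_monotone hS hg
  exact (floodCostIn_le_length hS').trans (hlen ▸ hle)

end Reindex

section Walks

variable {u v : V}

theorem pathColouring_apply (W : G.Walk u v) (i : Fin (W.length + 1)) :
    pathColouring ω W i = ω (W.getVert i) := by
  simp only [pathColouring, List.get_eq_getElem, Fin.val_cast, Walk.support_getElem_eq_getVert]

theorem monoLinked_getVert_of_pathColouring (W : G.Walk u v) {i j : Fin (W.length + 1)}
    (h : monoLinked (pathGraph (W.length + 1)) (pathColouring ω W) i j) :
    monoLinked G ω (W.getVert i) (W.getVert j) := by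
  refine Relation.ReflTransGen.lift (fun k : Fin _ => W.getVert k)
    (fun a b hab => ⟨?_, ?_⟩) _ _ h
  · change G.Adj (W.getVert a) (W.getVert b)
    rcases pathGraph_adj.1 hab.1 with h | h
    · rw [← h]; exact W.adj_getVert_succ (by omega)
    · rw [← h]; exact (W.adj_getVert_succ (by omega)).symm
  · simpa only [pathColouring_apply] using hab.2

theorem exists_monotone_pathColouring_eq_comp_of_sublist {u' v' : V} {W : G.Walk u v}
    {W' : G.Walk u' v'} (h : W'.support.Sublist W.support) (σ : V → C) :
    ∃ g : Fin (W'.length + 1) → Fin (W.length + 1), Monotone g ∧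
      pathColouring σ W' = pathColouring σ W ∘ g := by
  obtain ⟨f, hf⟩ := List.sublist_iff_exists_fin_orderEmbedding_get_eq.1 h
  refine ⟨fun i => Fin.cast W.length_support (f (Fin.cast W'.length_support.symm i)),
    fun i j hij => f.monotone hij, funext fun i => ?_⟩
  simp only [pathColouring, Function.comp_apply, hf, Fin.cast_cast, Fin.cast_eq_self]

theorem floodCostIn_pathColouring_bypass_le [DecidableEq V] (W : G.Walk u v) (d : C) :
    floodCostIn (pathGraph (W.bypass.length + 1)) (pathColouring ω W.bypass) d ≤
      floodCostIn (pathGraph (W.length + 1)) (pathColouring ω W) d := by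
  obtain ⟨g, hg, hcomp⟩ :=
    exists_monotone_pathColouring_eq_comp_of_sublist W.support_bypass_sublist_support ω
  rw [hcomp]
  exact floodCostIn_comp_le_of_monotone hg d

theorem getVert_take_append_append_drop (W : G.Walk u v) {ℓ r : ℕ} (hℓ : ℓ ≤ W.length)
    (M : G.Walk (W.getVert ℓ) (W.getVert r)) (j : ℕ) :
    ((W.take ℓ).append (M.append (W.drop r))).getVert j =
      if j < ℓ then W.getVert j
      else if j - ℓ < M.length then M.getVert (j - ℓ)
      else W.getVert (r + (j - ℓ - M.length)) := by
  rw [Walk.getVert_append, Walk.getVert_append, Walk.take_length, Walk.take_getVert,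
    Walk.drop_getVert, min_eq_left hℓ]
  split_ifs with h
  · rw [min_eq_right h.le]
  all_goals rfl

end Walks

section Detour

variable {u v : V}

/-- A rerouting of `W` that meets `D` in a single interval of positions, the fibre of `map` over
`p` (an interval because `map` is monotone); every other position copies `W` along `map`. -/
structure Detour (D : Set V) (W : G.Walk u v) (p : Fin (W.length + 1)) where
  walk : G.Walk u v
  map : Fin (walk.length + 1) → Fin (W.length + 1)
  monotone_map : Monotone map
  exists_map_eq : ∃ q, map q = p
  getVert_mem_iff : ∀ j : Fin (walk.length + 1), walk.getVert j ∈ D ↔ map j = p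
  getVert_eq_of_notMem :
    ∀ j : Fin (walk.length + 1), walk.getVert j ∉ D → walk.getVert j = W.getVert (map j)

theorem nonempty_detour_of_splice {D : Set V} (W : G.Walk u v) {p : Fin (W.length + 1)}
    {ℓ r : ℕ} (hℓp : ℓ ≤ p) (hpr : p ≤ r) (hrW : r ≤ W.length)
    (hbefore : ∀ j < ℓ, W.getVert j ∉ D)
    (hafter : ∀ j, r < j → j ≤ W.length → W.getVert j ∉ D)
    (M : G.Walk (W.getVert ℓ) (W.getVert r)) (hM : ∀ z ∈ M.support, z ∈ D) :
    Nonempty (Detour D W p) := by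
  let W' := (W.take ℓ).append (M.append (W.drop r))
  have hlen : W'.length = ℓ + M.length + (W.length - r) := by
    simp only [W', Walk.length_append, Walk.take_length, Walk.drop_length]
    omega
  have hvert : ∀ j, W'.getVert j = if j < ℓ then W.getVert j
      else if j - ℓ < M.length then M.getVert (j - ℓ)
      else W.getVert (r + (j - ℓ - M.length)) :=
    getVert_take_append_append_drop W (by omega) M
  let g : Fin (W'.length + 1) → Fin (W.length + 1) := fun j =>
    if h : j < ℓ then ⟨j, by omega⟩
    else if j ≤ ℓ + M.length then p else ⟨r + (j - ℓ - M.length), by omega⟩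
  have hmid :
      ∀ j : Fin (W'.length + 1), ℓ ≤ j → j ≤ ℓ + M.length → W'.getVert j ∈ D := by
    intro j hj₁ hj₂
    rw [hvert, if_neg (by omega)]
    split_ifs with h
    · exact hM _ (M.getVert_mem_support _)
    · rw [show r + (j - ℓ - M.length) = r by omega]
      exact hM _ M.end_mem_support
  have hout : ∀ j : Fin (W'.length + 1), ¬ (ℓ ≤ j ∧ j ≤ ℓ + M.length) →
      g j ≠ p ∧ W'.getVert j = W.getVert (g j) ∧ W.getVert (g j) ∉ D := by
    intro j hj
    by_cases h : j < ℓ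
    · simp only [g, dif_pos h, ne_eq, Fin.ext_iff]
      exact ⟨by omega, by rw [hvert, if_pos h], hbefore j h⟩
    · simp only [g, dif_neg h, if_neg (show ¬ j ≤ ℓ + M.length by omega), ne_eq, Fin.ext_iff]
      refine ⟨by omega, ?_, hafter _ (by omega) (by omega)⟩
      rw [hvert, if_neg h, if_neg (show ¬ (j : ℕ) - ℓ < M.length by omega)]
  refine ⟨⟨W', g, fun i j hij => ?_, ⟨⟨ℓ, by omega⟩, ?_⟩, fun j => ?_,
    fun j hj => ?_⟩⟩
  · have hij : (i : ℕ) ≤ j := hij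
    simp only [g]
    split_ifs <;> simp only [Fin.le_def] <;> omega
  · simp only [g, dif_neg (lt_irrefl ℓ), if_pos (Nat.le_add_right ℓ M.length)]
  · by_cases hj : ℓ ≤ j ∧ j ≤ ℓ + M.length
    · simp only [hmid j hj.1 hj.2, g, dif_neg (show ¬ j < ℓ by omega), if_pos hj.2]
    · obtain ⟨hne, heq, hnot⟩ := hout j hj
      simp only [heq, hnot, hne]
  · by_cases hmid' : ℓ ≤ j ∧ j ≤ ℓ + M.length
    · exact absurd (hmid j hmid'.1 hmid'.2) hj
    · exact (hout j hmid').2.1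

theorem nonempty_detour {D : Set V}
    (hD : ∀ x ∈ D, ∀ y ∈ D, ∃ M : G.Walk x y, ∀ z ∈ M.support, z ∈ D)
    (W : G.Walk u v) {p : Fin (W.length + 1)} (hp : W.getVert p ∈ D) :
    Nonempty (Detour D W p) := by
  classical
  obtain ⟨ℓ, r, hℓp, hpr, hrW, hℓ, hr, hbefore, hafter⟩ :=
    Nat.exists_first_last (P := fun j => W.getVert j ∈ D) hp (Nat.lt_succ_iff.1 p.isLt)
  obtain ⟨M, hM⟩ := hD _ hℓ _ hr
  exact nonempty_detour_of_splice W hℓp hpr hrW hbefore hafter M hM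

variable {W : G.Walk u v} {p : Fin (W.length + 1)}

theorem nonempty_detour_setOf_monoLinked {w : V} (hp : monoLinked G ω w (W.getVert p)) :
    Nonempty (Detour {z | monoLinked G ω w z} W p) :=
  nonempty_detour (fun _ hx _ hy =>
    let ⟨M, hM⟩ := (hx.symm.trans hy).exists_walk
    ⟨M, fun z hz => hx.trans (hM z hz)⟩) W hp

theorem Detour.pathColouring_eq_comp {D : Set V} (R : Detour D W p) {σ : V → C}
    (hσ : ∀ x ∈ D, σ x = σ (W.getVert p)) :
    pathColouring σ R.walk = pathColouring σ W ∘ R.map := by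
  funext j
  rw [Function.comp_apply, pathColouring_apply, pathColouring_apply]
  by_cases hj : R.map j = p
  · rw [hj, hσ _ ((R.getVert_mem_iff j).2 hj)]
  · rw [R.getVert_eq_of_notMem j (mt (R.getVert_mem_iff j).1 hj)]

theorem Detour.pathColouring_floodMove (R : Detour {z | monoLinked G ω (W.getVert p) z} W p)
    (c : C) : pathColouring (floodMove G ω (W.getVert p) c) R.walk =
      floodMove (pathGraph (W.length + 1)) (pathColouring ω W) p c ∘ R.map := by
  funext j
  rw [pathColouring_apply, Function.comp_apply]
  by_cases hj : R.map j = p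
  · rw [hj, floodMove_apply_of_monoLinked ((R.getVert_mem_iff j).2 hj),
      floodMove_apply_of_monoLinked .refl]
  · have hnot := mt (R.getVert_mem_iff j).1 hj
    have heq := R.getVert_eq_of_notMem j hnot
    rw [floodMove_apply_of_not_monoLinked hnot, floodMove_apply_of_not_monoLinked
      fun h => hnot (heq ▸ monoLinked_getVert_of_pathColouring W h), pathColouring_apply, heq]

theorem Detour.floodMove_pathColouring {w : V} (R : Detour {z | monoLinked G ω w z} W p)
    {q : Fin (R.walk.length + 1)} (hq : R.map q = p) (c : C) :
    floodMove (pathGraph (R.walk.length + 1)) (pathColouring ω R.walk) q c =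
      pathColouring (floodMove G ω w c) R.walk := by
  have hqD : monoLinked G ω w (R.walk.getVert q) := (R.getVert_mem_iff q).2 hq
  have hclass : ∀ j, monoLinked (pathGraph _) (pathColouring ω R.walk) q j ↔ R.map j = p := by
    refine fun j => ⟨fun h => (R.getVert_mem_iff j).1
      (hqD.trans (monoLinked_getVert_of_pathColouring R.walk h)), fun hj => ?_⟩
    refine monoLinked_pathGraph_iff.2 fun k hk => ?_
    have hkD : monoLinked G ω w (R.walk.getVert k) :=
      (R.getVert_mem_iff k).2 ((R.monotone_map.apply_eq_of_mem_uIcc (hq.trans hj.symm) hk).trans hq)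
    rw [pathColouring_apply, pathColouring_apply, ← hkD.colour_eq, ← hqD.colour_eq]
  funext j
  rw [pathColouring_apply]
  by_cases hj : R.map j = p
  · rw [floodMove_apply_of_monoLinked ((hclass j).2 hj),
      floodMove_apply_of_monoLinked ((R.getVert_mem_iff j).2 hj)]
  · rw [floodMove_apply_of_not_monoLinked (mt (hclass j).1 hj),
      floodMove_apply_of_not_monoLinked (mt (R.getVert_mem_iff j).1 hj), pathColouring_apply]

end Detour

section Transfer

variable {u v : V} {d : C}

theorem exists_walk_floodCostIn_le_of_links (S : List (V × C)) (ω : V → C)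
    (hlink : Links G ω S u v) (hu : floodSeq G ω S u = d) :
    ∃ W : G.Walk u v,
      floodCostIn (pathGraph (W.length + 1)) (pathColouring ω W) d ≤ S.length := by
  induction S generalizing ω with
  | nil =>
    obtain ⟨W, hW⟩ := monoLinked.exists_walk hlink
    refine ⟨W, floodCostIn_le_length (S := []) fun i => ?_⟩
    exact (pathColouring_apply W i).trans ((hW _ (W.getVert_mem_support _)).colour_eq.symm.trans hu)
  | cons m S ih =>
    obtain ⟨w, c⟩ := m
    obtain ⟨W, hW⟩ := ih (floodMove G ω w c) hlink hu
    by_cases hmeet : ∃ p : Fin (W.length + 1), monoLinked G ω w (W.getVert p)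
    · obtain ⟨p, hp⟩ := hmeet
      obtain ⟨R⟩ := nonempty_detour_setOf_monoLinked hp
      obtain ⟨q, hq⟩ := R.exists_map_eq
      have hσ : ∀ x ∈ {z | monoLinked G ω w z},
          floodMove G ω w c x = floodMove G ω w c (W.getVert p) := fun x hx => by
        rw [floodMove_apply_of_monoLinked hx, floodMove_apply_of_monoLinked hp]
      refine ⟨R.walk, ?_⟩
      calc floodCostIn (pathGraph _) (pathColouring ω R.walk) d
          ≤ floodCostIn (pathGraph _) (floodMove _ (pathColouring ω R.walk) q c) d + 1 :=
            floodCostIn_le_floodCostIn_floodMove_add_one q c d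
        _ = floodCostIn (pathGraph _) (pathColouring (floodMove G ω w c) W ∘ R.map) d + 1 := by
            rw [R.floodMove_pathColouring hq, R.pathColouring_eq_comp hσ]
        _ ≤ S.length + 1 := by
            grw [floodCostIn_comp_le_of_monotone R.monotone_map d, hW]
        _ = ((w, c) :: S).length := rfl
    · rw [not_exists] at hmeet
      have hcol : pathColouring (floodMove G ω w c) W = pathColouring ω W := funext fun j => by
        rw [pathColouring_apply, pathColouring_apply, floodMove_apply_of_not_monoLinked (hmeet j)]
      exact ⟨W, hcol ▸ hW.trans (Nat.le_succ _)⟩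

theorem exists_links_of_floods (W : G.Walk u v) (S : List (Fin (W.length + 1) × C))
    (hS : ∀ a, floodSeq (pathGraph (W.length + 1)) (pathColouring ω W) S a = d) :
    ∃ S' : List (V × C),
      S'.length ≤ S.length ∧ Links G ω S' u v ∧ floodSeq G ω S' u = d := by
  induction hn : S.length using Nat.strong_induction_on generalizing ω W S with
  | _ n ih =>
    rcases S with _ | ⟨⟨i, c⟩, S⟩
    · have hpath : monoLinked (pathGraph _) (pathColouring ω W) 0 (Fin.last _) :=
        monoLinked_pathGraph_iff.2 fun k _ => (hS k).trans (hS 0).symm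
      have hu := hS 0
      rw [floodSeq, List.foldl_nil, pathColouring_apply, Fin.val_zero, Walk.getVert_zero] at hu
      refine ⟨[], Nat.zero_le n, ?_, hu⟩
      have hlink := monoLinked_getVert_of_pathColouring W hpath
      rwa [Fin.val_zero, Fin.val_last, Walk.getVert_zero, Walk.getVert_length] at hlink
    · obtain ⟨R⟩ :=
        nonempty_detour_setOf_monoLinked (.refl : monoLinked G ω (W.getVert i) (W.getVert i))
      obtain ⟨S₁, hlen₁, hS₁⟩ := exists_floods_comp_of_monotone (S := S) hS R.monotone_map
      rw [← R.pathColouring_floodMove c] at hS₁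
      obtain ⟨S', hlen', hlink, hu⟩ :=
        ih S₁.length (by rw [← hn, List.length_cons]; omega) R.walk S₁ hS₁ rfl
      refine ⟨(W.getVert i, c) :: S', ?_, hlink, hu⟩
      rw [← hn, List.length_cons, List.length_cons]
      omega

end Transfer

end Flood

theorem linkCost_eq_min_over_paths_general {V C : Type*}
    (G : SimpleGraph V) (ω : V → C) (u v : V) (d : C) :
    linkCostIn G ω u v d =
      sInf {k | ∃ P : G.Walk u v, P.IsPath ∧
        k = floodCostIn (SimpleGraph.pathGraph (P.length + 1))
              (pathColouring ω P) d} := by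
  classical
  refine Nat.sInf_eq_sInf_of_forall_exists_le ?_ ?_
  · rintro _ ⟨S, rfl, hlink, hu⟩
    obtain ⟨W, hW⟩ := exists_walk_floodCostIn_le_of_links S ω hlink hu
    exact ⟨_, ⟨W.bypass, W.bypass_isPath, rfl⟩,
      (floodCostIn_pathColouring_bypass_le W d).trans hW⟩
  · rintro _ ⟨P, -, rfl⟩
    obtain ⟨S, hlen, hS⟩ := exists_length_eq_floodCostIn _ (pathColouring ω P) d
    obtain ⟨S', hle, hlink, hu⟩ := exists_links_of_floods P S hS
    exact ⟨_, ⟨S', rfl, hlink, hu⟩, hlen ▸ hle⟩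

/-- the minimum number of moves needed in `G` to link `u` and `v`
in colour `d` equals the minimum, over all `u`-`v` paths `P` of `G`, of the cost
of flooding the isolated path `P` (with the induced colouring) in colour `d`. -/
theorem linkCost_eq_min_over_paths {V C : Type*}
    (G : SimpleGraph V) (hG : G.Connected) (ω : V → C) (u v : V) (d : C) :
    linkCostIn G ω u v d =
      sInf {k | ∃ P : G.Walk u v, P.IsPath ∧
        k = floodCostIn (SimpleGraph.pathGraph (P.length + 1))
              (pathColouring ω P) d} :=
  linkCost_eq_min_over_paths_general G ω u v d
end

section
/- If binary strings s_1, …, s_k over the alphabet {1,2} have a common supersequence of length at most l, then the 3 × n board B constructed from these strings (with gadgets G_i encoding each s_i and terminal rectangle R) can be flooded, always playing at the top-left square, in at most 2l + 3 moves, via the move sequence a_1 3 a_2 3 … a_l 3 4 2 1 where a_1…a_l is a common supersequence of length l. -/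
namespace Flood

variable {V C : Type*}

/-- Apply a sequence of moves of the fixed game, each played at the fixed
vertex `t` (the top-left square). -/
noncomputable def fixedSeq (G : SimpleGraph V) (ω : V → C) (t : V)
    (M : List C) : V → C :=
  M.foldl (fun ω' d => floodMove G ω' t d) ω

/-- The `k × n` grid graph (squares adjacent horizontally or vertically). -/
def gridGraph (k n : ℕ) : SimpleGraph (Fin k × Fin n) :=
  SimpleGraph.fromRel (fun a b =>
    (a.1 = b.1 ∧ a.2.val + 1 = b.2.val) ∨ (a.2 = b.2 ∧ a.1.val + 1 = b.1.val))

end Flood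

namespace FloodBoard

/-- A column of a height-3 board: the colours of its top, middle and bottom
squares.  Colours `0,1,2,3` stand for the colours `1,2,3,4` of the paper. -/
abbrev Col := Fin 4 × Fin 4 × Fin 4

/-- The embedding of the binary alphabet `{1,2}` into the colour set. -/
def ch (a : Fin 2) : Fin 4 := Fin.castLE (by omega) a

/-- The columns of the gadget `G_i` for the string `s`: the top row lies in the
colour-3 background, the middle row is colour 4, and the bottom row alternates
colour 3 with the characters of `s` (read from the right), so that the bottom
row can only be flooded sequentially from the right, spelling out `s`. -/
def gadgetCols (s : List (Fin 2)) : List Col :=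
  (s.reverse.flatMap fun a => [((2 : Fin 4), 3, 2), ((2 : Fin 4), 3, ch a)]) ++
    [((2 : Fin 4), 3, 2)]

/-- The columns of the terminal rectangle `R`: `l` pairs of a choice column
(colours 1,2,1) and a colour-3 column, followed by full columns of colours
4, 2 and 1; in total `2l+3` columns. -/
def rCols (l : ℕ) : List Col :=
  (List.replicate l [((0 : Fin 4), 1, 0), ((2 : Fin 4), 2, 2)]).flatten ++
    [((3 : Fin 4), 3, 3), ((1 : Fin 4), 1, 1), ((0 : Fin 4), 0, 0)]

/-- The columns of the board `B` built from the strings in `L` and the bound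
`l`: the gadgets, each followed by a separating colour-3 column, and then the
rectangle `R` at the right-hand end. -/
def boardCols (L : List (List (Fin 2))) (l : ℕ) : List Col :=
  (L.flatMap fun s => gadgetCols s ++ [((2 : Fin 4), 2, 2)]) ++ rCols l

lemma boardCols_pos (L : List (List (Fin 2))) (l : ℕ) :
    0 < (boardCols L l).length := by
  simp [boardCols, rCols]

/-- The colouring of the board `B` as a `3 × n` grid. -/
def boardColouring (L : List (List (Fin 2))) (l : ℕ) :
    Fin 3 × Fin (boardCols L l).length → Fin 4 :=
  fun x =>
    let c := (boardCols L l).get x.2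
    if x.1 = 0 then c.1 else if x.1 = 1 then c.2.1 else c.2.2

/-- The top-left square of the board. -/
def topLeft (L : List (List (Fin 2))) (l : ℕ) :
    Fin 3 × Fin (boardCols L l).length :=
  ((0 : Fin 3), ⟨0, boardCols_pos L l⟩)

end FloodBoard


/-!
Colours below are the paper's. Play `a₁ 3 a₂ 3 … a_l 3 4 2 1` at the top-left square,
where `a₁ … a_l` is the common supersequence. A square joins the territory as soon as it
is adjacent to it and its original colour is played. Initially the territory holds the
top row of the gadgets, every separator column and the last bottom square of each
gadget. In `R`, each pair `aᵢ 3` enters the next choice column through its square of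
colour `aᵢ` and then takes the colour-3 column behind it. In the gadget of `s` the
bottom row is eaten from the right, two squares for each pair whose letter is the next
unmatched letter of `s`, so a supersequence eats all of it. Then `4` takes the middle
rows of the gadgets and the colour-4 column of `R`, `2` the middle squares of the choice
columns and the colour-2 column, and every square left outside the territory has
colour `1`.
-/

namespace Flood

variable {V C : Type*} {G : SimpleGraph V} {ω : V → C} {t u v w : V} {d : C}

theorem monoLinked.apply_eq (h : monoLinked G ω u v) : ω u = ω v := by
  induction h with
  | refl => rfl
  | tail _ hvw ih => exact ih.trans hvw.2

theorem floodMove_of_monoLinked (h : monoLinked G ω v u) : floodMove G ω v d u = d :=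
  if_pos h

theorem floodMove_of_not_monoLinked (h : ¬ monoLinked G ω v u) :
    floodMove G ω v d u = ω u :=
  if_neg h

theorem monoLinked.floodMove (h : monoLinked G ω v u) (d : C) :
    monoLinked G (floodMove G ω v d) v u := by
  induction h with
  | refl => exact .refl
  | @tail a b hva hab ih =>
    refine ih.tail ⟨hab.1, ?_⟩
    rw [floodMove_of_monoLinked hva, floodMove_of_monoLinked (hva.tail hab)]

theorem fixedSeq_concat (M : List C) (d : C) :
    fixedSeq G ω t (M ++ [d]) = floodMove G (fixedSeq G ω t M) t d := by
  simp [fixedSeq]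

def territory (G : SimpleGraph V) (ω : V → C) (t : V) (M : List C) : Set V :=
  {u | monoLinked G (fixedSeq G ω t M) t u}

theorem self_mem_territory (M : List C) : t ∈ territory G ω t M := .refl

theorem territory_subset_concat (M : List C) (d : C) :
    territory G ω t M ⊆ territory G ω t (M ++ [d]) := fun _ hu => by
  simpa only [territory, Set.mem_ofPred_eq, fixedSeq_concat] using hu.floodMove d

theorem territory_mono {M N : List C} (h : M <+: N) :
    territory G ω t M ⊆ territory G ω t N := by
  obtain ⟨N, rfl⟩ := h
  induction N using List.reverseRecOn with
  | nil => simp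
  | append_singleton N d ih =>
    rw [← List.append_assoc]
    exact ih.trans (territory_subset_concat _ d)

theorem fixedSeq_apply_of_mem_territory {M : List C} (hu : u ∈ territory G ω t M) :
    fixedSeq G ω t M u = fixedSeq G ω t M t :=
  (monoLinked.apply_eq hu).symm

theorem fixedSeq_concat_apply_self (M : List C) (d : C) :
    fixedSeq G ω t (M ++ [d]) t = d := by
  rw [fixedSeq_concat, floodMove_of_monoLinked .refl]

theorem fixedSeq_apply_of_not_mem_territory {M : List C} (hu : u ∉ territory G ω t M) :
    fixedSeq G ω t M u = ω u := by
  induction M using List.reverseRecOn with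
  | nil => rfl
  | append_singleton M d ih =>
    have hu' : u ∉ territory G ω t M := fun h => hu (territory_subset_concat M d h)
    rw [fixedSeq_concat, floodMove_of_not_monoLinked hu', ih hu']

/-- Squares outside the territory still carry their original colour. -/
theorem mem_territory_of_adj {M : List C} (hv : v ∈ territory G ω t M) (hvw : G.Adj v w)
    (hw : ω w = fixedSeq G ω t M t) : w ∈ territory G ω t M := by
  by_cases hw' : w ∈ territory G ω t M
  · exact hw'
  · refine Relation.ReflTransGen.tail hv ⟨hvw, ?_⟩
    rw [fixedSeq_apply_of_mem_territory hv, fixedSeq_apply_of_not_mem_territory hw', hw]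

theorem fixedSeq_concat_eq_of_forall_mem_territory {M : List C} {z : C}
    (hcov : ∀ u, ω u ≠ z → u ∈ territory G ω t M) (u : V) :
    fixedSeq G ω t (M ++ [z]) u = z := by
  by_cases hu : u ∈ territory G ω t (M ++ [z])
  · rw [fixedSeq_apply_of_mem_territory hu, fixedSeq_concat_apply_self]
  · rw [fixedSeq_apply_of_not_mem_territory hu]
    by_contra hz
    exact hu (territory_subset_concat M z (hcov u hz))

theorem gridGraph_adj_of_col {k n : ℕ} {r : Fin k} {j j' : Fin n} (h : j.val + 1 = j'.val) :
    (gridGraph k n).Adj (r, j) (r, j') := by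
  rw [gridGraph, SimpleGraph.fromRel_adj]
  exact ⟨by simp [Fin.ext_iff]; omega, .inl (.inl ⟨rfl, h⟩)⟩

theorem gridGraph_adj_of_row {k n : ℕ} {r r' : Fin k} {j : Fin n} (h : r.val + 1 = r'.val) :
    (gridGraph k n).Adj (r, j) (r', j) := by
  rw [gridGraph, SimpleGraph.fromRel_adj]
  exact ⟨by simp [Fin.ext_iff]; omega, .inl (.inr ⟨rfl, h⟩)⟩

end Flood

theorem List.exists_eq_append_of_lt_length_flatMap {α β : Type*} {f : α → List β}
    {L : List α} {j : ℕ} (hj : j < (L.flatMap f).length) :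
    ∃ a ∈ L, ∃ A B k,
      L.flatMap f = A ++ f a ++ B ∧ k < (f a).length ∧ j = A.length + k := by
  induction L generalizing j with
  | nil => simp at hj
  | cons a L ih =>
    rw [List.flatMap_cons, List.length_append] at hj
    by_cases hja : j < (f a).length
    · exact ⟨a, by simp, [], L.flatMap f, j, by simp, hja, by simp⟩
    · obtain ⟨b, hb, A, B, k, hL, hk, hjA⟩ := ih (j := j - (f a).length) (by omega)
      exact ⟨b, by simp [hb], f a ++ A, B, k, by simp [hL], hk, by simp; omega⟩

namespace FloodBoard
open Flood

variable {L : List (List (Fin 2))} {l : ℕ}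

def rowColour (r : Fin 3) (c : Col) : Fin 4 :=
  if r = 0 then c.1 else if r = 1 then c.2.1 else c.2.2

@[simp] theorem rowColour_const (r : Fin 3) (d : Fin 4) : rowColour r (d, d, d) = d := by
  unfold rowColour; split_ifs <;> rfl

theorem boardColouring_of_getElem? {j : ℕ} {c : Col} (hc : (boardCols L l)[j]? = some c)
    (r : Fin 3) (hj : j < (boardCols L l).length) :
    boardColouring L l (r, ⟨j, hj⟩) = rowColour r c := by
  obtain ⟨_, rfl⟩ := List.getElem?_eq_some_iff.1 hc
  rfl

theorem rCols_succ (l : ℕ) :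
    rCols (l + 1) = ((0 : Fin 4), 1, 0) :: ((2 : Fin 4), 2, 2) :: rCols l := by
  simp [rCols, List.replicate_succ]

theorem rCols_getElem?_two_mul_add (i m k : ℕ) :
    (rCols (i + m))[2 * i + k]? = (rCols m)[k]? := by
  induction i with
  | zero => simp
  | succ i ih =>
    rw [Nat.add_right_comm, rCols_succ, show 2 * (i + 1) + k = 2 * i + k + 1 + 1 by ring]
    simpa using ih

theorem rCols_length (l : ℕ) : (rCols l).length = 2 * l + 3 := by
  simp [rCols]; ring

def gadgetRegion (L : List (List (Fin 2))) : List Col :=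
  L.flatMap fun s => gadgetCols s ++ [((2 : Fin 4), 2, 2)]

theorem boardCols_eq (L : List (List (Fin 2))) (l : ℕ) :
    boardCols L l = gadgetRegion L ++ rCols l := rfl

theorem boardCols_length (L : List (List (Fin 2))) (l : ℕ) :
    (boardCols L l).length = (gadgetRegion L).length + (2 * l + 3) := by
  rw [boardCols_eq, List.length_append, rCols_length]

theorem boardCols_getElem?_of_lt {j : ℕ} (hj : j < (gadgetRegion L).length) :
    (boardCols L l)[j]? = (gadgetRegion L)[j]? :=
  List.getElem?_append_left hj

theorem boardCols_getElem?_rect (j : ℕ) :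
    (boardCols L l)[(gadgetRegion L).length + j]? = (rCols l)[j]? := by
  rw [boardCols_eq, List.getElem?_append_right (by omega)]
  simp

theorem boardCols_getElem?_choice {i : ℕ} (hi : i < l) :
    (boardCols L l)[(gadgetRegion L).length + 2 * i]? = some ((0 : Fin 4), 1, 0) := by
  obtain ⟨m, rfl⟩ := Nat.exists_eq_add_of_lt hi
  rw [boardCols_getElem?_rect, show i + m + 1 = i + (m + 1) by ring]
  simpa [rCols_succ] using rCols_getElem?_two_mul_add i (m + 1) 0

theorem boardCols_getElem?_sep {i : ℕ} (hi : i < l) :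
    (boardCols L l)[(gadgetRegion L).length + 2 * i + 1]? = some ((2 : Fin 4), 2, 2) := by
  obtain ⟨m, rfl⟩ := Nat.exists_eq_add_of_lt hi
  rw [Nat.add_assoc _ (2 * i), boardCols_getElem?_rect, show i + m + 1 = i + (m + 1) by ring]
  simpa [rCols_succ] using rCols_getElem?_two_mul_add i (m + 1) 1

theorem boardCols_getElem?_tail (k : ℕ) :
    (boardCols L l)[(gadgetRegion L).length + 2 * l + k]? =
      [((3 : Fin 4), 3, 3), ((1 : Fin 4), 1, 1), ((0 : Fin 4), 0, 0)][k]? := by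
  rw [add_assoc, boardCols_getElem?_rect]
  simpa [rCols] using rCols_getElem?_two_mul_add l 0 k

theorem gadgetCols_length (w : List (Fin 2)) : (gadgetCols w).length = 2 * w.length + 1 := by
  simp [gadgetCols]; ring

theorem gadgetCols_getElem?_two_mul_length (w : List (Fin 2)) :
    (gadgetCols w)[2 * w.length]? = some ((2 : Fin 4), 3, 2) := by
  simp [gadgetCols, mul_comm]

theorem gadgetCols_getElem?_of_eq_append_cons {w p s : List (Fin 2)} {a : Fin 2}
    (hw : w = p ++ a :: s) :
    (gadgetCols w)[2 * s.length]? = some ((2 : Fin 4), 3, 2) ∧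
      (gadgetCols w)[2 * s.length + 1]? = some ((2 : Fin 4), 3, ch a) := by
  subst hw
  simp [gadgetCols, mul_comm]


theorem mem_gadgetCols {w : List (Fin 2)} {c : Col} (hc : c ∈ gadgetCols w) :
    c.1 = 2 ∧ c.2.1 = 3 := by
  simp only [gadgetCols, List.mem_append, List.mem_flatMap, List.mem_cons,
    List.not_mem_nil, or_false] at hc
  rcases hc with ⟨a, -, rfl | rfl⟩ | rfl <;> exact ⟨rfl, rfl⟩

theorem top_of_mem_gadgetRegion {c : Col} (hc : c ∈ gadgetRegion L) : c.1 = 2 := by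
  simp only [gadgetRegion, List.mem_flatMap, List.mem_append, List.mem_singleton] at hc
  obtain ⟨w, -, hc | rfl⟩ := hc
  exacts [(mem_gadgetCols hc).1, rfl]

theorem exists_boardCols_getElem?_of_lt {j : ℕ} (hj : j < (gadgetRegion L).length) :
    ∃ c, (boardCols L l)[j]? = some c ∧ rowColour 0 c = 2 := by
  rw [boardCols_getElem?_of_lt hj]
  exact ⟨_, List.getElem?_eq_getElem hj, top_of_mem_gadgetRegion (List.getElem_mem hj)⟩

def GadgetAt (L : List (List (Fin 2))) (w : List (Fin 2)) (o : ℕ) : Prop :=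
  ∃ A B, gadgetRegion L = A ++ (gadgetCols w ++ [((2 : Fin 4), 2, 2)]) ++ B ∧ A.length = o

theorem exists_gadgetAt {j : ℕ} (hj : j < (gadgetRegion L).length) :
    ∃ w ∈ L, ∃ o k, GadgetAt L w o ∧ k < 2 * w.length + 2 ∧ j = o + k := by
  obtain ⟨w, hw, A, B, k, hL, hk, rfl⟩ := List.exists_eq_append_of_lt_length_flatMap hj
  exact ⟨w, hw, A.length, k, ⟨A, B, hL, rfl⟩, by simp [gadgetCols_length] at hk; omega, rfl⟩

namespace GadgetAt

variable {w : List (Fin 2)} {o : ℕ}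

theorem add_le (h : GadgetAt L w o) : o + (2 * w.length + 2) ≤ (gadgetRegion L).length := by
  obtain ⟨A, B, hL, rfl⟩ := h
  rw [hL]
  simp [gadgetCols_length]
  omega

theorem getElem? (h : GadgetAt L w o) {k : ℕ} (hk : k < 2 * w.length + 2) :
    (boardCols L l)[o + k]? = (gadgetCols w ++ [((2 : Fin 4), 2, 2)])[k]? := by
  rw [boardCols_getElem?_of_lt (by have := h.add_le; omega)]
  obtain ⟨A, B, hL, rfl⟩ := h
  rw [hL, List.getElem?_append_left (by simp [gadgetCols_length]; omega),
    List.getElem?_append_right (by omega)]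
  simp

theorem getElem?_gadgetCols (h : GadgetAt L w o) {k : ℕ} (hk : k ≤ 2 * w.length) :
    (boardCols L l)[o + k]? = (gadgetCols w)[k]? := by
  rw [h.getElem? (by omega), List.getElem?_append_left (by simp [gadgetCols_length]; omega)]

theorem getElem?_sep (h : GadgetAt L w o) :
    (boardCols L l)[o + (2 * w.length + 1)]? = some ((2 : Fin 4), 2, 2) := by
  rw [h.getElem? (by omega), List.getElem?_append_right (by simp [gadgetCols_length])]
  simp [gadgetCols_length]

theorem exists_getElem? (h : GadgetAt L w o) {k : ℕ} (hk : k ≤ 2 * w.length) :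
    ∃ c ∈ gadgetCols w, (boardCols L l)[o + k]? = some c := by
  have hk' : k < (gadgetCols w).length := by rw [gadgetCols_length]; omega
  rw [h.getElem?_gadgetCols hk]
  exact ⟨_, List.getElem_mem hk', List.getElem?_eq_getElem hk'⟩

end GadgetAt

noncomputable def topColour (L : List (List (Fin 2))) (l : ℕ) (M : List (Fin 4)) : Fin 4 :=
  fixedSeq (gridGraph 3 (boardCols L l).length) (boardColouring L l) (topLeft L l) M
    (topLeft L l)

@[simp] theorem topColour_concat (M : List (Fin 4)) (d : Fin 4) :
    topColour L l (M ++ [d]) = d :=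
  fixedSeq_concat_apply_self M d

theorem topColour_nil (hg : 0 < (gadgetRegion L).length) : topColour L l [] = 2 := by
  obtain ⟨c, hc, hc0⟩ := exists_boardCols_getElem?_of_lt (l := l) hg
  exact (boardColouring_of_getElem? hc 0 _).trans hc0

/-- Vacuous beyond the last column, which saves carrying bounds. -/
def Reached (L : List (List (Fin 2))) (l : ℕ) (M : List (Fin 4)) (r : Fin 3) (j : ℕ) : Prop :=
  ∀ hj : j < (boardCols L l).length,
    (r, ⟨j, hj⟩) ∈ territory (gridGraph 3 (boardCols L l).length) (boardColouring L l)
      (topLeft L l) M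

def ColumnReached (L : List (List (Fin 2))) (l : ℕ) (M : List (Fin 4)) (j : ℕ) : Prop :=
  ∀ r, Reached L l M r j

/-- The first alternative is needed only for the top-left square of a board without
gadgets. -/
def Anchored (L : List (List (Fin 2))) (l : ℕ) (M : List (Fin 4)) (c : ℕ) : Prop :=
  Reached L l M 0 c ∨ ∃ j, j + 1 = c ∧ ColumnReached L l M j

variable {M N : List (Fin 4)} {r r' : Fin 3} {j j' : ℕ} {c : Col}

theorem Reached.mono (h : Reached L l M r j) (hMN : M <+: N) : Reached L l N r j :=
  fun hj => territory_mono hMN (h hj)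

theorem ColumnReached.mono (h : ColumnReached L l M j) (hMN : M <+: N) :
    ColumnReached L l N j :=
  fun r => (h r).mono hMN

theorem Anchored.mono (h : Anchored L l M j) (hMN : M <+: N) : Anchored L l N j := by
  rcases h with h | ⟨j, hj, hcol⟩
  exacts [.inl (h.mono hMN), .inr ⟨j, hj, hcol.mono hMN⟩]

theorem Reached.of_adj (h : Reached L l M r j) (hj : j < (boardCols L l).length)
    (hadj : ∀ (hj : j < (boardCols L l).length) (hj' : j' < (boardCols L l).length),
      (gridGraph 3 (boardCols L l).length).Adj (r, ⟨j, hj⟩) (r', ⟨j', hj'⟩))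
    (hc : (boardCols L l)[j']? = some c) (hd : rowColour r' c = topColour L l M) :
    Reached L l M r' j' := fun hj' =>
  mem_territory_of_adj (h hj) (hadj hj hj') ((boardColouring_of_getElem? hc r' hj').trans hd)

theorem Reached.right (h : Reached L l M r j) (hjj : j + 1 = j')
    (hc : (boardCols L l)[j']? = some c) (hd : rowColour r c = topColour L l M) :
    Reached L l M r j' :=
  h.of_adj (by have := (List.getElem?_eq_some_iff.1 hc).1; omega)
    (fun _ _ => gridGraph_adj_of_col hjj) hc hd

theorem Reached.left (h : Reached L l M r j') (hjj : j + 1 = j')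
    (hj' : j' < (boardCols L l).length) (hc : (boardCols L l)[j]? = some c)
    (hd : rowColour r c = topColour L l M) : Reached L l M r j :=
  h.of_adj hj' (fun _ _ => (gridGraph_adj_of_col hjj).symm) hc hd

theorem Reached.down (h : Reached L l M r j) (hrr : r.val + 1 = r'.val)
    (hc : (boardCols L l)[j]? = some c) (hd : rowColour r' c = topColour L l M) :
    Reached L l M r' j :=
  h.of_adj (List.getElem?_eq_some_iff.1 hc).1 (fun _ _ => gridGraph_adj_of_row hrr) hc hd

theorem Reached.up (h : Reached L l M r j) (hrr : r'.val + 1 = r.val)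
    (hc : (boardCols L l)[j]? = some c) (hd : rowColour r' c = topColour L l M) :
    Reached L l M r' j :=
  h.of_adj (List.getElem?_eq_some_iff.1 hc).1 (fun _ _ => (gridGraph_adj_of_row hrr).symm) hc hd

theorem ColumnReached.of_reached {d : Fin 4} (h : Reached L l M r j)
    (hc : (boardCols L l)[j]? = some (d, d, d)) (hd : d = topColour L l M) :
    ColumnReached L l M j := by
  have hd' : ∀ r, rowColour r (d, d, d) = topColour L l M := fun r => by simpa using hd
  have h1 : Reached L l M 1 j := by
    fin_cases r
    exacts [h.down rfl hc (hd' 1), h, h.up rfl hc (hd' 1)]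
  intro r'
  fin_cases r'
  exacts [h1.up rfl hc (hd' 0), h1, h1.down rfl hc (hd' 2)]

theorem reached_top (hj : j < (gadgetRegion L).length) : Reached L l [] 0 j := by
  induction j with
  | zero => exact fun _ => self_mem_territory []
  | succ j ih =>
    obtain ⟨c, hc, hc0⟩ := exists_boardCols_getElem?_of_lt (l := l) hj
    exact (ih (by omega)).right rfl hc (hc0.trans (topColour_nil (by omega)).symm)

/-- The moves `a₁ 3 a₂ 3 …` of the paper (its colour `3` is `2` here). -/
def pairMoves (u : List (Fin 2)) : List (Fin 4) :=
  u.flatMap fun a => [ch a, 2]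

theorem append_pairMoves_cons (M : List (Fin 4)) (a : Fin 2) (u : List (Fin 2)) :
    M ++ pairMoves (a :: u) = M ++ [ch a] ++ [2] ++ pairMoves u := by
  simp [pairMoves]

theorem pairMoves_length (u : List (Fin 2)) : (pairMoves u).length = 2 * u.length := by
  simp [pairMoves, mul_comm]

namespace GadgetAt

variable {w : List (Fin 2)} {o : ℕ}

theorem columnReached_sep (h : GadgetAt L w o) :
    ColumnReached L l [] (o + (2 * w.length + 1)) :=
  have := h.add_le
  .of_reached (reached_top (by omega)) h.getElem?_sep (topColour_nil (by omega)).symm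

theorem reached_middle (h : GadgetAt L w o) (hsep : Reached L l M 1 (o + (2 * w.length + 1)))
    {k : ℕ} (hk : k ≤ 2 * w.length) : Reached L l (M ++ [3]) 1 (o + k) := by
  have hlt : o + (2 * w.length + 1) < (boardCols L l).length := by
    have := h.add_le; have := boardCols_length L l; omega
  refine Nat.decreasingInduction (motive := fun k _ => Reached L l (M ++ [3]) 1 (o + k))
    (fun k hk ih => ?_) (hsep.mono (List.prefix_append _ _)) (by omega : k ≤ 2 * w.length + 1)
  obtain ⟨c, hc, hck⟩ := h.exists_getElem? (by omega : k ≤ 2 * w.length)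
  exact ih.left (by omega) (by omega) hck (by simp [rowColour, (mem_gadgetCols hc).2])

theorem reached_bottom_of_sublist (h : GadgetAt L w o) {s u : List (Fin 2)} (hsu : s.Sublist u) :
    ∀ p M, w = p ++ s →
      (∀ k, 2 * s.length ≤ k → k ≤ 2 * w.length → Reached L l M 2 (o + k)) →
      ∀ k ≤ 2 * w.length, Reached L l (M ++ pairMoves u) 2 (o + k) := by
  have hlen := h.add_le
  have hN := boardCols_length L l
  induction hsu with
  | slnil => exact fun p M _ hM k hk => by simpa [pairMoves] using hM k (Nat.zero_le _) hk
  | cons a _ ih =>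
    intro p M hw hM
    rw [append_pairMoves_cons]
    exact ih p _ hw fun k h1 h2 => (hM k h1 h2).mono (by simp)
  | @cons_cons s u a _ ih =>
    intro p M hw hM
    have hs : 2 * s.length + 2 ≤ 2 * w.length := by simp [hw]; omega
    obtain ⟨hX, hY⟩ := gadgetCols_getElem?_of_eq_append_cons hw
    have h1 : Reached L l (M ++ [ch a]) 2 (o + (2 * s.length + 1)) :=
      ((hM (2 * s.length + 2) (by simp; omega) hs).mono (List.prefix_append _ _)).left
        (by omega) (by omega) (by rw [h.getElem?_gadgetCols (by omega), hY])
        (by rw [topColour_concat]; rfl)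
    have h2 : Reached L l (M ++ [ch a] ++ [2]) 2 (o + 2 * s.length) :=
      (h1.mono (List.prefix_append _ _)).left (by omega) (by omega)
        (by rw [h.getElem?_gadgetCols (by omega), hX]) (by rw [topColour_concat]; rfl)
    rw [append_pairMoves_cons]
    refine ih (p ++ [a]) _ (by simp [hw]) fun k hk1 hk2 => ?_
    rcases (by omega : k = 2 * s.length ∨ k = 2 * s.length + 1 ∨ 2 * s.length + 2 ≤ k)
      with rfl | rfl | hk
    · exact h2
    · exact h1.mono (List.prefix_append _ _)
    · exact (hM k (by simp; omega) hk2).mono (by simp)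

theorem reached_bottom (h : GadgetAt L w o) {u : List (Fin 2)} (hwu : w.Sublist u) {k : ℕ}
    (hk : k ≤ 2 * w.length) : Reached L l (pairMoves u) 2 (o + k) := by
  have hlen := h.add_le
  have hlt : o + (2 * w.length + 1) < (boardCols L l).length := by
    have := boardCols_length L l; omega
  have hbase : Reached L l [] 2 (o + 2 * w.length) :=
    (h.columnReached_sep 2).left rfl hlt
      (by rw [h.getElem?_gadgetCols le_rfl, gadgetCols_getElem?_two_mul_length])
      (by rw [topColour_nil (by omega)]; rfl)
  refine h.reached_bottom_of_sublist hwu [] [] rfl (fun k h1 h2 => ?_) k hk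
  obtain rfl : k = 2 * w.length := by omega
  exact hbase

end GadgetAt

theorem anchored_nil : Anchored L l [] (gadgetRegion L).length := by
  rcases Nat.eq_zero_or_pos (gadgetRegion L).length with hg | hg
  · exact .inl (hg ▸ fun _ => self_mem_territory [])
  · obtain ⟨w, -, o, k, h, hk, hjk⟩ := exists_gadgetAt (Nat.sub_lt hg one_pos)
    have := h.add_le
    obtain rfl : k = 2 * w.length + 1 := by omega
    exact .inr ⟨_, by omega, h.columnReached_sep⟩

namespace Anchored

variable {c : ℕ}

theorem reached_choice (ha : Anchored L l M c)
    (hc : (boardCols L l)[c]? = some ((0 : Fin 4), 1, 0)) :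
    Reached L l (M ++ [0]) 0 c ∧ Reached L l (M ++ [1]) 1 c := by
  rcases ha with h0 | ⟨j, rfl, hj⟩
  · exact ⟨h0.mono (List.prefix_append _ _),
      (h0.mono (List.prefix_append _ _)).down rfl hc (by rw [topColour_concat]; rfl)⟩
  · exact ⟨((hj 0).mono (List.prefix_append _ _)).right rfl hc (by rw [topColour_concat]; rfl),
      ((hj 1).mono (List.prefix_append _ _)).right rfl hc (by rw [topColour_concat]; rfl)⟩

theorem columnReached_succ (ha : Anchored L l M c)
    (hC : (boardCols L l)[c]? = some ((0 : Fin 4), 1, 0))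
    (hS : (boardCols L l)[c + 1]? = some ((2 : Fin 4), 2, 2)) (a : Fin 2) :
    ColumnReached L l (M ++ [ch a] ++ [2]) (c + 1) := by
  obtain ⟨r, hr⟩ : ∃ r, Reached L l (M ++ [ch a]) r c := by
    fin_cases a
    exacts [⟨0, (ha.reached_choice hC).1⟩, ⟨1, (ha.reached_choice hC).2⟩]
  exact .of_reached ((hr.mono (List.prefix_append _ _)).right rfl hS
    (by rw [topColour_concat, rowColour_const])) hS (topColour_concat _ _).symm

theorem columnReached_concat {d : Fin 4} (ha : Anchored L l M c)
    (hc : (boardCols L l)[c]? = some (d, d, d)) : ColumnReached L l (M ++ [d]) c := by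
  rcases ha with h0 | ⟨j, rfl, hj⟩
  · exact .of_reached (h0.mono (List.prefix_append _ _)) hc (by simp)
  · exact .of_reached (((hj 0).mono (List.prefix_append _ _)).right rfl hc (by simp)) hc
      (by simp)

end Anchored

theorem columnReached_rect_sep (u : List (Fin 2)) :
    ∀ i M, i + u.length ≤ l → Anchored L l M ((gadgetRegion L).length + 2 * i) →
      ∀ j, i ≤ j → j < i + u.length →
        ColumnReached L l (M ++ pairMoves u) ((gadgetRegion L).length + 2 * j + 1) := by
  induction u with
  | nil => intro i M _ _ j h1 h2; simp at h2; omega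
  | cons a u ih =>
    intro i M hl ha j hij hj
    simp only [List.length_cons] at hl hj
    have hcol := ha.columnReached_succ (boardCols_getElem?_choice (by omega))
      (boardCols_getElem?_sep (by omega)) a
    rw [append_pairMoves_cons]
    rcases hij.eq_or_lt with rfl | hij
    · exact hcol.mono (List.prefix_append _ _)
    · exact ih (i + 1) _ (by omega) (.inr ⟨_, by ring, hcol⟩) j (by omega) (by omega)

theorem reached_final_gadget {u : List (Fin 2)} (hsup : ∀ w ∈ L, w.Sublist u) (r : Fin 3)
    (hj : j < (gadgetRegion L).length) : Reached L l (pairMoves u ++ [3] ++ [1]) r j := by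
  obtain ⟨w, hw, o, k, h, hk, rfl⟩ := exists_gadgetAt hj
  by_cases hsep : k = 2 * w.length + 1
  · subst hsep
    exact (h.columnReached_sep r).mono List.nil_prefix
  have hk' : k ≤ 2 * w.length := by omega
  fin_cases r
  · exact (reached_top hj).mono List.nil_prefix
  · exact (h.reached_middle ((h.columnReached_sep 1).mono List.nil_prefix) hk').mono
      (List.prefix_append _ _)
  · exact (h.reached_bottom (hsup w hw) hk').mono (by simp)

theorem reached_final_rect {u : List (Fin 2)} (hu : u.length = l)
    (hgj : (gadgetRegion L).length ≤ j) (hj : j < (boardCols L l).length)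
    (hne : boardColouring L l (r, ⟨j, hj⟩) ≠ 0) :
    Reached L l (pairMoves u ++ [3] ++ [1]) r j := by
  have hN := boardCols_length L l
  have hcols : ∀ i < l, ColumnReached L l (pairMoves u) ((gadgetRegion L).length + 2 * i + 1) :=
    fun i hi => by
      simpa using columnReached_rect_sep u 0 [] (by omega) anchored_nil i (Nat.zero_le _)
        (by omega)
  have hanch : ∀ i ≤ l, Anchored L l (pairMoves u) ((gadgetRegion L).length + 2 * i) := by
    rintro (_ | i) hi
    · exact anchored_nil.mono List.nil_prefix
    · exact .inr ⟨_, by ring, hcols i (by omega)⟩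
  have h3 : ColumnReached L l (pairMoves u ++ [3]) ((gadgetRegion L).length + 2 * l) :=
    (hanch l le_rfl).columnReached_concat (by simpa using boardCols_getElem?_tail (L := L) 0)
  obtain ⟨i, hi | hi⟩ := Nat.even_or_odd' (j - (gadgetRegion L).length)
  · obtain rfl : j = (gadgetRegion L).length + 2 * i := by omega
    rcases Nat.lt_trichotomy i l with hil | rfl | hil
    · have hC := boardCols_getElem?_choice (L := L) hil
      rw [boardColouring_of_getElem? hC] at hne
      fin_cases r
      · exact absurd rfl hne
      · exact (((hanch i hil.le).mono (List.prefix_append _ _)).reached_choice hC).2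
      · exact absurd rfl hne
    · exact (h3 r).mono (List.prefix_append _ _)
    · have h0 : (boardCols L l)[(gadgetRegion L).length + 2 * i]? = some (0, 0, 0) := by
        rw [show (gadgetRegion L).length + 2 * i = (gadgetRegion L).length + 2 * l + 2 by omega]
        simpa using boardCols_getElem?_tail (L := L) (l := l) 2
      exact absurd ((boardColouring_of_getElem? h0 r hj).trans (rowColour_const r 0)) hne
  · obtain rfl : j = (gadgetRegion L).length + 2 * i + 1 := by omega
    rcases Nat.lt_or_ge i l with hil | hil
    · exact (hcols i hil r).mono (by simp)
    · obtain rfl : i = l := by omega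
      exact ((h3 r).mono (List.prefix_append _ _)).right rfl
        (by simpa using boardCols_getElem?_tail (L := L) 1)
        (by rw [topColour_concat, rowColour_const])

theorem mem_territory_final {u : List (Fin 2)} (hu : u.length = l)
    (hsup : ∀ w ∈ L, w.Sublist u) (x : Fin 3 × Fin (boardCols L l).length)
    (hx : boardColouring L l x ≠ 0) :
    x ∈ territory (gridGraph 3 (boardCols L l).length) (boardColouring L l) (topLeft L l)
      (pairMoves u ++ [3] ++ [1]) := by
  obtain ⟨r, j, hj⟩ := x
  by_cases hjg : j < (gadgetRegion L).length
  · exact reached_final_gadget hsup r hjg hj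
  · exact reached_final_rect hu (by omega) hj hx hj

end FloodBoard

open Flood FloodBoard

/-- if the strings `s_1, …, s_k` over `{1,2}` have a common
supersequence of length at most `l`, then the `3 × n` board `B` built from them
(gadgets `G_i` plus terminal rectangle `R`) can be flooded, always playing at
the top-left square, in at most `2l + 3` moves (via the move sequence
`a₁ 3 a₂ 3 … a_l 3 4 2 1` for a common supersequence `a₁ … a_l`). -/
theorem supersequence_floods_board (L : List (List (Fin 2))) (l : ℕ)
    (t : List (Fin 2)) (hlen : t.length ≤ l) (hsup : ∀ s ∈ L, s.Sublist t) :
    ∃ M : List (Fin 4), M.length ≤ 2 * l + 3 ∧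
      ∀ a b : Fin 3 × Fin (boardCols L l).length,
        fixedSeq (Flood.gridGraph 3 (boardCols L l).length)
            (boardColouring L l) (topLeft L l) M a =
          fixedSeq (Flood.gridGraph 3 (boardCols L l).length)
            (boardColouring L l) (topLeft L l) M b := by
  -- The rectangle has one choice column per move pair, so the supersequence is padded.
  set u := t ++ List.replicate (l - t.length) 0
  have hu : u.length = l := by simp [u]; omega
  have hsupu : ∀ s ∈ L, s.Sublist u := fun s hs =>
    (hsup s hs).trans (List.sublist_append_left _ _)
  refine ⟨pairMoves u ++ [3] ++ [1] ++ [0], by simp [pairMoves_length, hu], fun a b => ?_⟩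
  have hflood := fixedSeq_concat_eq_of_forall_mem_territory (mem_territory_final hu hsupu)
  rw [hflood a, hflood b]
end
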